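/- Let {f_i}_{i∈I} be a family in H with ∑_{i∈I} |⟨f_i, e_j⟩|² < ∞ for all j ∈ I, and let {ω_j}_{j∈I} be an R-dual of type I of {f_i} with respect to a pair of orthonormal bases ({e_j},{h_i}) of H. Then: (i) for all constants 0 < A ≤ B, {f_i} is a frame for H with bounds A, B if and only if {ω_j} is a Riesz sequence in H with bounds A, B; (ii) {ω_j} is a Riesz basis for H if and only if {f_i} is a Riesz basis for H. -/

import Mathlib

open scoped ComplexInnerProductSpace

noncomputable section

section Defs

variable {H : Type*} [NormedAddCommGroup H] [InnerProductSpace ℂ H]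
variable {I : Type*}

/-- `A` is a lower frame bound for the family `f`. -/
def FrameLower (f : I → H) (A : ℝ) : Prop :=
  ∀ (x : H) (s : ℝ), HasSum (fun i => ‖⟪x, f i⟫‖ ^ 2) s → A * ‖x‖ ^ 2 ≤ s

/-- `B` is an upper frame bound for the family `f` (including summability). -/
def FrameUpper (f : I → H) (B : ℝ) : Prop :=
  ∀ x : H, ∃ s : ℝ, HasSum (fun i => ‖⟪x, f i⟫‖ ^ 2) s ∧ s ≤ B * ‖x‖ ^ 2

/-- `f` is a frame with bounds `A`, `B`. -/
def IsFrameWith (f : I → H) (A B : ℝ) : Prop :=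
  0 < A ∧ A ≤ B ∧ FrameLower f A ∧ FrameUpper f B

/-- `A`, `B` are the optimal frame bounds of `f`. -/
def OptimalFrameBounds (f : I → H) (A B : ℝ) : Prop :=
  IsFrameWith f A B ∧ (∀ A' : ℝ, FrameLower f A' → A' ≤ A) ∧
    ∀ B' : ℝ, FrameUpper f B' → B ≤ B'

/-- `A` is a lower Riesz-sequence bound for `ω`. -/
def RieszLower (ω : I → H) (A : ℝ) : Prop :=
  ∀ c : I →₀ ℂ, A * ∑ i ∈ c.support, ‖c i‖ ^ 2 ≤ ‖∑ i ∈ c.support, c i • ω i‖ ^ 2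

/-- `B` is an upper Riesz-sequence bound for `ω`. -/
def RieszUpper (ω : I → H) (B : ℝ) : Prop :=
  ∀ c : I →₀ ℂ, ‖∑ i ∈ c.support, c i • ω i‖ ^ 2 ≤ B * ∑ i ∈ c.support, ‖c i‖ ^ 2

/-- `ω` is a Riesz sequence with bounds `A`, `B`. -/
def IsRieszSeqWith (ω : I → H) (A B : ℝ) : Prop :=
  0 < A ∧ A ≤ B ∧ RieszLower ω A ∧ RieszUpper ω B

/-- `A`, `B` are the optimal Riesz-sequence bounds of `ω`. -/
def OptimalRieszBounds (ω : I → H) (A B : ℝ) : Prop :=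
  IsRieszSeqWith ω A B ∧ (∀ A' : ℝ, RieszLower ω A' → A' ≤ A) ∧
    ∀ B' : ℝ, RieszUpper ω B' → B ≤ B'

/-- `ω` is a Riesz basis for `H`: a Riesz sequence whose closed linear span is all of `H`. -/
def IsRieszBasisFor (ω : I → H) : Prop :=
  (∃ A B : ℝ, IsRieszSeqWith ω A B) ∧
    (Submodule.span ℂ (Set.range ω)).topologicalClosure = ⊤

/-- `R` is a (self-adjoint, positive) square root of `T`. -/
def IsPosSqrtOf (R T : H →L[ℂ] H) : Prop :=
  (∀ x y : H, ⟪R x, y⟫ = ⟪x, R y⟫) ∧ (∀ x : H, 0 ≤ (⟪R x, x⟫).re) ∧ R ∘L R = T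

/-- `S` and `T` are mutually inverse operators. -/
def AreInverse (S T : H →L[ℂ] H) : Prop :=
  S ∘L T = ContinuousLinearMap.id ℂ H ∧ T ∘L S = ContinuousLinearMap.id ℂ H

/-- Property (★): for every `d ∈ ℓ²(I)` whose coordinatewise conjugate lies in the range of
the analysis operator (encoded by the predicate `rangeU`), one has
`(1/√nSinv)·‖d‖ ≤ ‖Q (∑ dᵢ hbᵢ)‖ ≤ √nS·‖d‖`, and the constants `1/√nSinv`, `√nS`
are optimal. -/
def PropertyStar (rangeU : (I → ℂ) → Prop) (hb : HilbertBasis I ℂ H)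
    (Q : H →L[ℂ] H) (nS nSinv : ℝ) : Prop :=
  (∀ (d : I → ℂ) (v : H), HasSum (fun i => d i • (hb i : H)) v → rangeU d →
      (1 / Real.sqrt nSinv) * Real.sqrt (∑' i, ‖d i‖ ^ 2) ≤ ‖Q v‖ ∧
        ‖Q v‖ ≤ Real.sqrt nS * Real.sqrt (∑' i, ‖d i‖ ^ 2)) ∧
  (∀ B' : ℝ,
      (∀ (d : I → ℂ) (v : H), HasSum (fun i => d i • (hb i : H)) v → rangeU d →
        ‖Q v‖ ≤ B' * Real.sqrt (∑' i, ‖d i‖ ^ 2)) →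
      Real.sqrt nS ≤ B') ∧
  (∀ A' : ℝ,
      (∀ (d : I → ℂ) (v : H), HasSum (fun i => d i • (hb i : H)) v → rangeU d →
        A' * Real.sqrt (∑' i, ‖d i‖ ^ 2) ≤ ‖Q v‖) →
      A' ≤ 1 / Real.sqrt nSinv)

/-- `ω` is the R-dual of type III determined by the data `(g, e, hb, Q)`, where `g i`
stands for `S^{-1/2} f i`:  `ω j = ∑ᵢ ⟪S^{-1/2} fᵢ, eⱼ⟫ • Q hbᵢ`. -/
def IsRDualIIIOf (g : I → H) (e hb : HilbertBasis I ℂ H) (Q : H →L[ℂ] H) (ω : I → H) : Prop :=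
  ∀ j, HasSum (fun i => ⟪g i, e j⟫ • Q (hb i : H)) (ω j)

end Defs

/-! For `x = ∑ⱼ cⱼ eⱼ` one has `∑ⱼ cⱼ ωⱼ = ∑ᵢ ⟪fᵢ, x⟫ hᵢ`, hence `‖∑ⱼ cⱼ ωⱼ‖² = ∑ᵢ |⟪x, fᵢ⟫|²`
while `‖x‖² = ∑ⱼ |cⱼ|²`. So the Riesz inequalities of `ω` are exactly the frame inequalities of
`f` on the dense subspace `span e`, and those extend to all of `H`: the upper one because every
finite partial sum is continuous, the lower one because, once `f` is Bessel, its analysis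
operator is continuous.

The relation is symmetric (`f` is the R-dual of `ω` with respect to `(h, e)`), so for (ii) it
suffices to show that a Riesz basis `ω` is a frame. The operator `V x = ∑ᵢ ⟪fᵢ, x⟫ hᵢ` sends `eⱼ`
to `ωⱼ` and is bounded below; its range is closed and contains `span ω`, so `V` is onto, which
makes `V†` bounded below as well, and `∑ⱼ |⟪y, ωⱼ⟫|² = ‖V† y‖²`. Finally a frame has dense span. -/

section RDual

open scoped InnerProductSpace InnerProduct lp
open Set Submodule

lemma le_sqrt_mul_of_sq_le {a b c : ℝ} (hc : 0 ≤ c) (h : a ^ 2 ≤ b * c ^ 2) : a ≤ √b * c := by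
  rw [← Real.sqrt_sq hc, ← Real.sqrt_mul' _ (sq_nonneg c)]
  exact Real.le_sqrt_of_sq_le h

section General

variable {𝕜 : Type*} [RCLike 𝕜] {I : Type*}
  {E : Type*} [NormedAddCommGroup E] [InnerProductSpace 𝕜 E]
  {F : Type*} [NormedAddCommGroup F] [InnerProductSpace 𝕜 F]

lemma lp.hasSum_norm_sq {G : I → Type*} [∀ i, NormedAddCommGroup (G i)] (x : lp G 2) :
    HasSum (fun i => ‖x i‖ ^ 2) (‖x‖ ^ 2) := by
  simpa using lp.hasSum_norm (p := 2) (by norm_num) x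

lemma Orthonormal.norm_sum_smul_sq {v : I → E} (hv : Orthonormal 𝕜 v) (s : Finset I)
    (c : I → 𝕜) : ‖∑ j ∈ s, c j • v j‖ ^ 2 = ∑ j ∈ s, ‖c j‖ ^ 2 := by
  rw [← RCLike.ofReal_inj (K := 𝕜), RCLike.ofReal_pow, ← inner_self_eq_norm_sq_to_K,
    hv.inner_sum]
  simp [RCLike.conj_mul]

namespace HilbertBasis

variable (b : HilbertBasis I 𝕜 E)

lemma hasSum_norm_inner_sq (x : E) : HasSum (fun i => ‖⟪b i, x⟫_𝕜‖ ^ 2) (‖x‖ ^ 2) := by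
  simpa [b.repr_apply_apply] using lp.hasSum_norm_sq (b.repr x)

lemma inner_eq_of_hasSum {d : I → 𝕜} {v : E} (h : HasSum (fun i => d i • b i) v) (i : I) :
    ⟪b i, v⟫_𝕜 = d i := by
  classical
  refine (h.mapL (innerSL 𝕜 (b i))).unique ?_
  convert hasSum_ite_eq i (d i) using 2 with j
  rcases eq_or_ne j i with rfl | hj
  · simp [b.orthonormal.1 j]
  · simp [b.orthonormal.2 hj.symm, hj]

lemma hasSum_norm_sq_of_hasSum {d : I → 𝕜} {v : E} (h : HasSum (fun i => d i • b i) v) :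
    HasSum (fun i => ‖d i‖ ^ 2) (‖v‖ ^ 2) := by
  simpa only [b.inner_eq_of_hasSum h] using b.hasSum_norm_inner_sq v

lemma hasSum_norm_inner_apply_sq [CompleteSpace E] [CompleteSpace F] (V : E →L[𝕜] F) (y : F) :
    HasSum (fun i => ‖⟪y, V (b i)⟫_𝕜‖ ^ 2) (‖(V†) y‖ ^ 2) := by
  convert b.hasSum_norm_inner_sq ((V†) y) using 2 with i
  rw [norm_inner_symm (b i), ContinuousLinearMap.adjoint_inner_left]

end HilbertBasis

namespace ContinuousLinearMap

lemma surjective_of_denseRange_of_sq_le [CompleteSpace E] (V : E →L[𝕜] F) {A : ℝ} (hA : 0 < A)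
    (hV : ∀ x, A * ‖x‖ ^ 2 ≤ ‖V x‖ ^ 2) (hd : DenseRange V) : Function.Surjective V := by
  have hanti : AntilipschitzWith ⟨(√A)⁻¹, by positivity⟩ V := by
    refine V.antilipschitz_of_bound fun x => ?_
    change ‖x‖ ≤ (√A)⁻¹ * ‖V x‖
    rw [le_inv_mul_iff₀ (by positivity), ← Real.sqrt_sq (norm_nonneg (V x)),
      ← Real.sqrt_sq (norm_nonneg x), ← Real.sqrt_mul hA.le]
    exact Real.sqrt_le_sqrt (hV x)
  rw [← Set.range_eq_univ, ← hd.closure_eq, (hanti.isClosed_range V.uniformContinuous).closure_eq]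

variable [CompleteSpace E] [CompleteSpace F]

lemma mul_norm_sq_le_norm_adjoint_apply_sq (V : E →L[𝕜] F) {A : ℝ}
    (hV : ∀ x, A * ‖x‖ ^ 2 ≤ ‖V x‖ ^ 2) (hsurj : Function.Surjective V) (y : F) :
    A * ‖y‖ ^ 2 ≤ ‖(V†) y‖ ^ 2 := by
  obtain ⟨x, rfl⟩ := hsurj y
  have hcs : ‖V x‖ ^ 2 ≤ ‖(V†) (V x)‖ * ‖x‖ := by
    rw [← inner_self_eq_norm_sq (𝕜 := 𝕜), ← adjoint_inner_left]
    exact re_inner_le_norm _ _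
  rcases le_or_gt A 0 with hA | hA
  · exact (mul_nonpos_of_nonpos_of_nonneg hA (sq_nonneg _)).trans (sq_nonneg _)
  rcases (norm_nonneg (V x)).eq_or_lt with h0 | hpos
  · simp [← h0]
  refine le_of_mul_le_mul_right ?_ (pow_pos hpos 2)
  calc A * ‖V x‖ ^ 2 * ‖V x‖ ^ 2 = A * (‖V x‖ ^ 2) ^ 2 := by ring
    _ ≤ A * (‖(V†) (V x)‖ * ‖x‖) ^ 2 := by gcongr
    _ = ‖(V†) (V x)‖ ^ 2 * (A * ‖x‖ ^ 2) := by ring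
    _ ≤ ‖(V†) (V x)‖ ^ 2 * ‖V x‖ ^ 2 := by gcongr; exact hV x

lemma norm_adjoint_apply_sq_le (V : E →L[𝕜] F) {B : ℝ} (hB : 0 ≤ B)
    (hV : ∀ x, ‖V x‖ ^ 2 ≤ B * ‖x‖ ^ 2) (y : F) : ‖(V†) y‖ ^ 2 ≤ B * ‖y‖ ^ 2 := by
  have hnorm : ‖V‖ ≤ √B :=
    V.opNorm_le_bound (Real.sqrt_nonneg B) fun x => le_sqrt_mul_of_sq_le (norm_nonneg x) (hV x)
  calc ‖(V†) y‖ ^ 2 ≤ (‖V†‖ * ‖y‖) ^ 2 := by gcongr; exact (V†).le_opNorm y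
    _ ≤ (√B * ‖y‖) ^ 2 := by rw [LinearIsometryEquiv.norm_map]; gcongr
    _ = B * ‖y‖ ^ 2 := by rw [mul_pow, Real.sq_sqrt hB]

end ContinuousLinearMap

end General

variable {H : Type*} [NormedAddCommGroup H] [InnerProductSpace ℂ H] {I : Type*}

section Frames

variable {f : I → H} {A B : ℝ}

lemma frameUpper_of_dense {s : Set H} (hs : Dense s)
    (h : ∀ x ∈ s, ∃ t, HasSum (fun i => ‖⟪x, f i⟫‖ ^ 2) t ∧ t ≤ B * ‖x‖ ^ 2) :
    FrameUpper f B := by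
  have hpartial (G : Finset I) (x : H) : ∑ i ∈ G, ‖⟪x, f i⟫‖ ^ 2 ≤ B * ‖x‖ ^ 2 := by
    refine hs.induction (fun x hx => ?_) (isClosed_le (by fun_prop) (by fun_prop)) x
    obtain ⟨t, ht, htB⟩ := h x hx
    exact (sum_le_hasSum G (fun i _ => sq_nonneg _) ht).trans htB
  intro x
  have hsum := summable_of_sum_le (fun i => sq_nonneg _) (hpartial · x)
  exact ⟨_, hsum.hasSum, hsum.tsum_le_of_sum_le (hpartial · x)⟩

namespace FrameUpper

lemma memℓp_inner (hf : FrameUpper f B) (x : H) : Memℓp (fun i => ⟪f i, x⟫) 2 := by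
  obtain ⟨t, ht, -⟩ := hf x
  exact memℓp_gen (by simpa [norm_inner_symm] using ht.summable)

def analysisOp (hf : FrameUpper f B) : H →L[ℂ] ℓ²(I, ℂ) :=
  LinearMap.mkContinuous
    { toFun := fun x => ⟨fun i => ⟪f i, x⟫, hf.memℓp_inner x⟩
      map_add' := fun x y => by ext i; exact inner_add_right _ _ _
      map_smul' := fun c x => by ext i; exact inner_smul_right _ _ _ }
    √B fun x => by
      obtain ⟨t, ht, htB⟩ := hf x
      have hnorm := lp.hasSum_norm_sq (⟨_, hf.memℓp_inner x⟩ : ℓ²(I, ℂ))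
      change HasSum (fun i => ‖⟪f i, x⟫‖ ^ 2) _ at hnorm
      simp_rw [norm_inner_symm (f _)] at hnorm
      exact le_sqrt_mul_of_sq_le (norm_nonneg x) (ht.unique hnorm ▸ htB)

lemma hasSum_norm_analysisOp_sq (hf : FrameUpper f B) (x : H) :
    HasSum (fun i => ‖⟪x, f i⟫‖ ^ 2) (‖hf.analysisOp x‖ ^ 2) := by
  convert lp.hasSum_norm_sq (hf.analysisOp x) using 3 with i
  exact norm_inner_symm (𝕜 := ℂ) x (f i)

end FrameUpper

lemma frameLower_of_dense (hf : FrameUpper f B) {s : Set H} (hs : Dense s)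
    (h : ∀ x ∈ s, ∀ t, HasSum (fun i => ‖⟪x, f i⟫‖ ^ 2) t → A * ‖x‖ ^ 2 ≤ t) :
    FrameLower f A := by
  have hT := hf.hasSum_norm_analysisOp_sq
  have hbound (x : H) : A * ‖x‖ ^ 2 ≤ ‖hf.analysisOp x‖ ^ 2 :=
    hs.induction (fun x hx => h x hx _ (hT x)) (isClosed_le (by fun_prop) (by fun_prop)) x
  intro x t ht
  exact ht.unique (hT x) ▸ hbound x

lemma FrameLower.topologicalClosure_span_eq_top [CompleteSpace H] (hA : 0 < A)
    (hf : FrameLower f A) : (span ℂ (range f)).topologicalClosure = ⊤ := by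
  rw [topologicalClosure_eq_top_iff, eq_bot_iff]
  intro x hx
  have hzero (i : I) : ⟪x, f i⟫ = 0 :=
    inner_eq_zero_symm.mp ((mem_orthogonal _ x).mp hx _ (subset_span ⟨i, rfl⟩))
  have hx0 : A * ‖x‖ ^ 2 ≤ 0 := hf x 0 (by simp [hzero])
  simpa using nonpos_of_mul_nonpos_right hx0 hA

lemma isFrameWith_apply_hilbertBasis {K : Type*} [NormedAddCommGroup K] [InnerProductSpace ℂ K]
    [CompleteSpace K] [CompleteSpace H] (e : HilbertBasis I ℂ K) (V : K →L[ℂ] H) (hA : 0 < A)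
    (hAB : A ≤ B) (hlow : ∀ y, A * ‖y‖ ^ 2 ≤ ‖(V†) y‖ ^ 2)
    (hup : ∀ y, ‖(V†) y‖ ^ 2 ≤ B * ‖y‖ ^ 2) : IsFrameWith (fun j => V (e j)) A B :=
  ⟨hA, hAB, fun y _ ht => ht.unique (e.hasSum_norm_inner_apply_sq V y) ▸ hlow y,
    fun y => ⟨_, e.hasSum_norm_inner_apply_sq V y, hup y⟩⟩

end Frames

lemma hasSum_inner_sum_smul {f e h ω : I → H}
    (hω : ∀ j, HasSum (fun i => ⟪f i, e j⟫ • h i) (ω j)) (s : Finset I) (c : I → ℂ) :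
    HasSum (fun i => ⟪f i, ∑ j ∈ s, c j • e j⟫ • h i) (∑ j ∈ s, c j • ω j) := by
  simp_rw [inner_sum, inner_smul_right, Finset.sum_smul, mul_smul]
  exact hasSum_sum fun j _ => (hω j).const_smul (c j)

def IsRDualIOf (f : I → H) (e hb : HilbertBasis I ℂ H) (ω : I → H) : Prop :=
  ∀ j, HasSum (fun i => ⟪f i, (e j : H)⟫ • (hb i : H)) (ω j)

namespace IsRDualIOf

variable {f ω : I → H} {e hb : HilbertBasis I ℂ H} {A B : ℝ}

lemma symm (hω : IsRDualIOf f e hb ω) : IsRDualIOf ω hb e f := fun i => by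
  have hcoeff (j : I) : ⟪ω j, (hb i : H)⟫ = ⟪(e j : H), f i⟫ := by
    rw [← inner_conj_symm, hb.inner_eq_of_hasSum (hω j), inner_conj_symm]
  simpa only [hcoeff, e.repr_apply_apply] using e.hasSum_repr (f i)

lemma hasSum_norm_inner_sum_smul_sq (hω : IsRDualIOf f e hb ω) (s : Finset I) (c : I → ℂ) :
    HasSum (fun i => ‖⟪∑ j ∈ s, c j • (e j : H), f i⟫‖ ^ 2) (‖∑ j ∈ s, c j • ω j‖ ^ 2) := by
  simpa only [norm_inner_symm (f _)] using
    hb.hasSum_norm_sq_of_hasSum (hasSum_inner_sum_smul hω s c)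

lemma rieszLower_iff (hω : IsRDualIOf f e hb ω) :
    RieszLower ω A ↔
      ∀ x ∈ span ℂ (range e), ∀ t, HasSum (fun i => ‖⟪x, f i⟫‖ ^ 2) t → A * ‖x‖ ^ 2 ≤ t := by
  refine ⟨fun h x hx t ht => ?_, fun h c => ?_⟩
  · obtain ⟨c, rfl⟩ := Finsupp.mem_span_range_iff_exists_finsupp.mp hx
    rw [Finsupp.sum, e.orthonormal.norm_sum_smul_sq,
      ht.unique (hω.hasSum_norm_inner_sum_smul_sq _ _)]
    exact h c
  · simpa [e.orthonormal.norm_sum_smul_sq] using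
      h _ (sum_smul_mem _ _ fun j _ => subset_span ⟨j, rfl⟩) _
        (hω.hasSum_norm_inner_sum_smul_sq c.support c)

lemma rieszUpper_iff (hω : IsRDualIOf f e hb ω) :
    RieszUpper ω B ↔
      ∀ x ∈ span ℂ (range e), ∃ t, HasSum (fun i => ‖⟪x, f i⟫‖ ^ 2) t ∧ t ≤ B * ‖x‖ ^ 2 := by
  refine ⟨fun h x hx => ?_, fun h c => ?_⟩
  · obtain ⟨c, rfl⟩ := Finsupp.mem_span_range_iff_exists_finsupp.mp hx
    refine ⟨_, hω.hasSum_norm_inner_sum_smul_sq _ _, ?_⟩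
    rw [Finsupp.sum, e.orthonormal.norm_sum_smul_sq]
    exact h c
  · obtain ⟨t, ht, htB⟩ := h _ (sum_smul_mem _ _ fun j _ => subset_span ⟨j, rfl⟩)
    rwa [ht.unique (hω.hasSum_norm_inner_sum_smul_sq c.support c),
      e.orthonormal.norm_sum_smul_sq] at htB

theorem isFrameWith_iff (hω : IsRDualIOf f e hb ω) :
    IsFrameWith f A B ↔ IsRieszSeqWith ω A B := by
  rw [IsFrameWith, IsRieszSeqWith, hω.rieszLower_iff, hω.rieszUpper_iff]
  refine and_congr_right fun _ => and_congr_right fun _ =>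
    ⟨fun ⟨hl, hu⟩ => ⟨fun x _ => hl x, fun x _ => hu x⟩, fun ⟨hl, hu⟩ => ?_⟩
  have hdense : Dense (span ℂ (range e) : Set H) :=
    dense_iff_topologicalClosure_eq_top.mpr e.dense_span
  have hupper := frameUpper_of_dense hdense hu
  exact ⟨frameLower_of_dense hupper hdense hl, hupper⟩

theorem isRieszBasisFor [CompleteSpace H] (hω : IsRDualIOf f e hb ω) (hR : IsRieszBasisFor ω) :
    IsRieszBasisFor f := by
  obtain ⟨⟨A, B, hωR⟩, hdense⟩ := hR
  obtain ⟨hA, hAB, hlow, hup⟩ := hω.isFrameWith_iff.mpr hωR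
  set V : H →L[ℂ] H := (hb.repr.symm : ℓ²(I, ℂ) →L[ℂ] H) ∘L hup.analysisOp
  have hVe : (fun j => V (e j)) = ω := funext fun j => (hb.hasSum_repr_symm _).unique (hω j)
  have hV (x : H) : HasSum (fun i => ‖⟪x, f i⟫‖ ^ 2) (‖V x‖ ^ 2) := by
    simpa [V] using hup.hasSum_norm_analysisOp_sq x
  have hVlow (x : H) : A * ‖x‖ ^ 2 ≤ ‖V x‖ ^ 2 := hlow x _ (hV x)
  have hVup (x : H) : ‖V x‖ ^ 2 ≤ B * ‖x‖ ^ 2 := by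
    obtain ⟨t, ht, htB⟩ := hup x
    exact ht.unique (hV x) ▸ htB
  have hVdense : DenseRange V := by
    have hspan : span ℂ (range ω) ≤ V.range := by
      rw [← hVe]
      exact span_le.mpr (range_comp_subset_range e V)
    exact (dense_iff_topologicalClosure_eq_top.mpr hdense).mono hspan
  have hVsurj := V.surjective_of_denseRange_of_sq_le hA hVlow hVdense
  have hωF : IsFrameWith ω A B := hVe ▸ isFrameWith_apply_hilbertBasis e V hA hAB
    (V.mul_norm_sq_le_norm_adjoint_apply_sq hVlow hVsurj)
    (V.norm_adjoint_apply_sq_le (hA.le.trans hAB) hVup)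
  exact ⟨⟨A, B, hω.symm.isFrameWith_iff.mp hωF⟩, hlow.topologicalClosure_span_eq_top hA⟩

end IsRDualIOf

end RDual

theorem rdualI_frame_iff_riesz_general
    {H : Type*} [NormedAddCommGroup H] [InnerProductSpace ℂ H] [CompleteSpace H]
    {I : Type*}
    (f : I → H)
    (e hb : HilbertBasis I ℂ H)
    (ω : I → H)
    -- ω is the R-dual of type I of f with respect to (e, hb)
    (hω : ∀ j, HasSum (fun i => ⟪f i, (e j : H)⟫ • (hb i : H)) (ω j)) :
    (∀ A B : ℝ, 0 < A → A ≤ B → (IsFrameWith f A B ↔ IsRieszSeqWith ω A B)) ∧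
      (IsRieszBasisFor ω ↔ IsRieszBasisFor f) :=
  have hdual : IsRDualIOf f e hb ω := hω
  ⟨fun _ _ _ _ => hdual.isFrameWith_iff, hdual.isRieszBasisFor, hdual.symm.isRieszBasisFor⟩

/-- properties of R-duals of type I: `f` is a frame with bounds `A`, `B` iff
its R-dual of type I `ω` is a Riesz sequence with bounds `A`, `B`; and `ω` is a Riesz basis
for `H` iff `f` is a Riesz basis for `H`. -/
theorem rdualI_frame_iff_riesz
    {H : Type*} [NormedAddCommGroup H] [InnerProductSpace ℂ H] [CompleteSpace H]
    {I : Type*} [Countable I]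
    (f : I → H)
    (e hb : HilbertBasis I ℂ H)
    (hsq : ∀ j, Summable fun i => ‖⟪f i, (e j : H)⟫‖ ^ 2)
    (ω : I → H)
    -- ω is the R-dual of type I of f with respect to (e, hb)
    (hω : ∀ j, HasSum (fun i => ⟪f i, (e j : H)⟫ • (hb i : H)) (ω j)) :
    (∀ A B : ℝ, 0 < A → A ≤ B → (IsFrameWith f A B ↔ IsRieszSeqWith ω A B)) ∧
      (IsRieszBasisFor ω ↔ IsRieszBasisFor f) :=
  rdualI_frame_iff_riesz_general f e hb ω hω
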